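/- arXiv:2510.11662 — 4 statements merged into one kernel-verified Lean document; each statement's English description precedes it below -/
import Mathlib

section
/- Let v : [-λ, λ] → ℝ be C² on (-λ,λ) and continuous on [-λ,λ], with v(±λ) = 0, v'(±λ) = 0 (as one-sided limits), and suppose there exists y ∈ (0,λ) such that v'' > 0 on (-λ,-y) ∪ (y,λ) and v'' < 0 on (-y,y). Then v(x) > 0 for all x ∈ (-λ, λ). -/
/-!
Outside `(-y, y)` the function is convex and flat at the endpoint: `v'` is strictly increasing
there and tends to `0` at `±lam`, so `v' < 0` on `(y, lam)` and `v' > 0` on `(-lam, -y)`, and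
`v` decreases (resp. increases) strictly to its boundary value `0`. Hence `v > 0` on
`(-lam, -y]` and on `[y, lam)`, and on `[-y, y]`, where `v` is concave, the minimum principle
bounds `v` below by `min (v (-y)) (v y) > 0`.
-/

open Set Filter Topology

theorem StrictMonoOn.lt_of_tendsto_nhdsLT {g : ℝ → ℝ} {a b L : ℝ}
    (hg : StrictMonoOn g (Ioo a b)) (hL : Tendsto g (𝓝[<] b) (𝓝 L)) {x : ℝ}
    (hx : x ∈ Ioo a b) : g x < L := by
  obtain ⟨z, hxz, hzb⟩ := exists_between hx.2
  have hz : z ∈ Ioo a b := ⟨hx.1.trans hxz, hzb⟩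
  refine (hg hx hz hxz).trans_le (ge_of_tendsto hL ?_)
  filter_upwards [Ioo_mem_nhdsLT hzb] with w hw
  exact (hg hz ⟨hz.1.trans hw.1, hw.2⟩ hw.1).le

theorem pos_of_deriv2_pos_of_flat_at_right {v : ℝ → ℝ} {a b : ℝ}
    (hcont : ContinuousOn v (Icc a b)) (hvb : v b = 0)
    (hd : Tendsto (deriv v) (𝓝[<] b) (𝓝 0))
    (h2 : ∀ x ∈ Ioo a b, 0 < deriv (deriv v) x) {x : ℝ} (hx : x ∈ Ico a b) : 0 < v x := by
  have hmono : StrictMonoOn (deriv v) (Ioo a b) :=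
    strictMonoOn_of_deriv_pos (convex_Ioo a b)
      -- `v'' z ≠ 0` already forces `v'` to be differentiable, hence continuous, at `z`
      (fun z hz => (differentiableAt_of_deriv_ne_zero (h2 z hz).ne').continuousAt.continuousWithinAt)
      (by simpa only [interior_Ioo] using h2)
  have hanti : StrictAntiOn v (Icc a b) :=
    strictAntiOn_of_deriv_neg (convex_Icc a b) hcont
      (by simpa only [interior_Icc] using fun z hz => hmono.lt_of_tendsto_nhdsLT hd hz)
  simpa only [hvb] using
    hanti (Ico_subset_Icc_self hx) (right_mem_Icc.2 (hx.1.trans_lt hx.2).le) hx.2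

theorem pos_of_deriv2_pos_of_flat_at_left {v : ℝ → ℝ} {a b : ℝ}
    (hcont : ContinuousOn v (Icc a b)) (hva : v a = 0)
    (hd : Tendsto (deriv v) (𝓝[>] a) (𝓝 0))
    (h2 : ∀ x ∈ Ioo a b, 0 < deriv (deriv v) x) {x : ℝ} (hx : x ∈ Ioc a b) : 0 < v x := by
  let w : ℝ → ℝ := fun t => v (-t)
  have hw' : deriv w = fun t => -deriv v (-t) := funext fun t => deriv_comp_neg v t
  have hw'' (t : ℝ) : deriv (deriv w) t = deriv (deriv v) (-t) := by simp [hw', deriv_comp_neg]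
  have hwd : Tendsto (deriv w) (𝓝[<] (-a)) (𝓝 0) := by
    simpa [hw'] using (hd.comp tendsto_neg_nhdsLT_neg).neg
  have hw_pos := pos_of_deriv2_pos_of_flat_at_right (v := w) (a := -b) (b := -a)
    (hcont.comp continuousOn_neg fun t ht => ⟨by linarith [ht.2], by linarith [ht.1]⟩)
    (by simpa [w] using hva) hwd
    (fun t ht => (hw'' t).symm ▸ h2 (-t) ⟨by linarith [ht.2], by linarith [ht.1]⟩)
    (x := -x) ⟨by linarith [hx.2], by linarith [hx.1]⟩
  simpa [w] using hw_pos

theorem stmt5_general (lam : ℝ) (v : ℝ → ℝ) (y : ℝ)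
    (hy : y ∈ Set.Ioo 0 lam)
    (hcont : ContinuousOn v (Set.Icc (-lam) lam))
    (hv1 : v lam = 0) (hv2 : v (-lam) = 0)
    (hd1 : Filter.Tendsto (deriv v) (nhdsWithin lam (Set.Iio lam)) (nhds 0))
    (hd2 : Filter.Tendsto (deriv v) (nhdsWithin (-lam) (Set.Ioi (-lam))) (nhds 0))
    (hpos : ∀ x ∈ Set.Ioo (-lam) (-y) ∪ Set.Ioo y lam, 0 < deriv (deriv v) x)
    (hneg : ∀ x ∈ Set.Ioo (-y) y, deriv (deriv v) x < 0) :
    ∀ x ∈ Set.Ioo (-lam) lam, 0 < v x := by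
  obtain ⟨hy0, hyl⟩ := hy
  have hright : ∀ x ∈ Ico y lam, 0 < v x := fun x hx =>
    pos_of_deriv2_pos_of_flat_at_right (hcont.mono (Icc_subset_Icc (by linarith) le_rfl)) hv1 hd1
      (fun z hz => hpos z (Or.inr hz)) hx
  have hleft : ∀ x ∈ Ioc (-lam) (-y), 0 < v x := fun x hx =>
    pos_of_deriv2_pos_of_flat_at_left (hcont.mono (Icc_subset_Icc le_rfl (by linarith))) hv2 hd2
      (fun z hz => hpos z (Or.inl hz)) hx
  have hconcave : ConcaveOn ℝ (Icc (-y) y) v :=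
    (strictConcaveOn_of_deriv2_neg (convex_Icc _ _)
      (hcont.mono (Icc_subset_Icc (by linarith) (by linarith)))
      fun x hx => hneg x (by rwa [interior_Icc] at hx)).concaveOn
  intro x hx
  rcases lt_or_ge x (-y) with hxy | hxy
  · exact hleft x ⟨hx.1, hxy.le⟩
  rcases le_or_gt x y with hyx | hyx
  · exact (lt_min (hleft (-y) ⟨by linarith, le_rfl⟩) (hright y ⟨le_rfl, hyl⟩)).trans_le
      (hconcave.min_le_of_mem_Icc (left_mem_Icc.2 (by linarith)) (right_mem_Icc.2 (by linarith))
        ⟨hxy, hyx⟩)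
  · exact hright x ⟨hyx.le, hx.2⟩

theorem stmt5 (lam : ℝ) (hlam : 0 < lam) (v : ℝ → ℝ) (y : ℝ)
    (hy : y ∈ Set.Ioo 0 lam)
    (hcont : ContinuousOn v (Set.Icc (-lam) lam))
    (hC2 : ContDiffOn ℝ 2 v (Set.Ioo (-lam) lam))
    (hv1 : v lam = 0) (hv2 : v (-lam) = 0)
    (hd1 : Filter.Tendsto (deriv v) (nhdsWithin lam (Set.Iio lam)) (nhds 0))
    (hd2 : Filter.Tendsto (deriv v) (nhdsWithin (-lam) (Set.Ioi (-lam))) (nhds 0))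
    (hpos : ∀ x ∈ Set.Ioo (-lam) (-y) ∪ Set.Ioo y lam, 0 < deriv (deriv v) x)
    (hneg : ∀ x ∈ Set.Ioo (-y) y, deriv (deriv v) x < 0) :
    ∀ x ∈ Set.Ioo (-lam) lam, 0 < v x :=
  stmt5_general lam v y hy hcont hv1 hv2 hd1 hd2 hpos hneg
end

section
/- Let 0 < s < 1 and μ a nonnegative integrable function supported on [-1,-λ]∪[λ,1] with λ ∈ (0,1). If ∫_{supp μ}(|x-y|^{-s} μ(y)) dy = (3/(1-s))x² holds for x in an interval [λ,1], and we set ε = 1-λ, then the total mass satisfies ∫ μ ≤ 6 ε^s. -/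
/-!
Write `I = [λ, 1]`, `ε = 1 - λ` and `m = ∫_I μ`; by symmetry the total mass is `2 m`.
Dropping the nonnegative contribution of `[-1, -λ]`, the Euler–Lagrange identity gives
`∫_I |x - y| ^ (-s) μ y dy ≤ 3 / (1 - s)` for every `x ∈ I`. Integrate this over `x ∈ I` and
swap the integrals: for `y ∈ I` the inner integral `∫_I |x - y| ^ (-s) dx` equals
`((y - λ) ^ (1 - s) + (1 - y) ^ (1 - s)) / (1 - s)`, which is at least `ε ^ (1 - s) / (1 - s)`
by subadditivity of `t ↦ t ^ (1 - s)`. Hence `ε ^ (1 - s) m ≤ 3 ε`, that is `m ≤ 3 ε ^ s`.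
-/

open MeasureTheory Set intervalIntegral
open scoped ENNReal

theorem mul_lintegral_le_of_kernel_bounds {α β : Type*} [MeasurableSpace α] [MeasurableSpace β]
    {ν₁ : Measure α} {ν₂ : Measure β} [SFinite ν₁] [SFinite ν₂]
    {K : α → β → ℝ≥0∞} (hK : Measurable (Function.uncurry K))
    {f : β → ℝ≥0∞} (hf : AEMeasurable f ν₂) {C d : ℝ≥0∞}
    (hC : ∀ᵐ x ∂ν₁, ∫⁻ y, K x y * f y ∂ν₂ ≤ C) (hd : ∀ᵐ y ∂ν₂, d ≤ ∫⁻ x, K x y ∂ν₁) :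
    d * ∫⁻ y, f y ∂ν₂ ≤ C * ν₁ univ :=
  calc d * ∫⁻ y, f y ∂ν₂ = ∫⁻ y, d * f y ∂ν₂ := (lintegral_const_mul'' d hf).symm
    _ ≤ ∫⁻ y, (∫⁻ x, K x y ∂ν₁) * f y ∂ν₂ :=
      lintegral_mono_ae (hd.mono fun _ hy => mul_le_mul_left hy _)
    _ = ∫⁻ y, ∫⁻ x, K x y * f y ∂ν₁ ∂ν₂ :=
      lintegral_congr fun _ => (lintegral_mul_const _ hK.of_uncurry_right).symm
    _ = ∫⁻ x, ∫⁻ y, K x y * f y ∂ν₂ ∂ν₁ :=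
      (lintegral_lintegral_swap (hK.aemeasurable.mul (hf.comp_snd (μ := ν₁)))).symm
    _ ≤ ∫⁻ _, C ∂ν₁ := lintegral_mono_ae hC
    _ = C * ν₁ univ := lintegral_const C

theorem mul_integral_le_of_kernel_bounds {α β : Type*} [MeasurableSpace α] [MeasurableSpace β]
    {ν₁ : Measure α} {ν₂ : Measure β} [IsFiniteMeasure ν₁] [SFinite ν₂]
    {K : α → β → ℝ} (hK : Measurable (Function.uncurry K)) (hK0 : ∀ x y, 0 ≤ K x y)
    {f : β → ℝ} (hf : Integrable f ν₂) (hf0 : 0 ≤ᵐ[ν₂] f) {C d : ℝ} (hC0 : 0 ≤ C)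
    (hC : ∀ᵐ x ∂ν₁, Integrable (fun y => K x y * f y) ν₂ ∧ ∫ y, K x y * f y ∂ν₂ ≤ C)
    (hd : ∀ᵐ y ∂ν₂, Integrable (K · y) ν₁ ∧ d ≤ ∫ x, K x y ∂ν₁) :
    d * ∫ y, f y ∂ν₂ ≤ C * ν₁.real univ := by
  have hKf : ∀ x, 0 ≤ᵐ[ν₂] fun y => K x y * f y := fun x =>
    hf0.mono fun y hy => mul_nonneg (hK0 x y) hy
  have hmass := mul_lintegral_le_of_kernel_bounds (ν₁ := ν₁) (ν₂ := ν₂)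
    (K := fun x y => ENNReal.ofReal (K x y)) (f := fun y => ENNReal.ofReal (f y))
    (C := ENNReal.ofReal C) (d := ENNReal.ofReal d) hK.ennreal_ofReal
    hf.1.aemeasurable.ennreal_ofReal
    (hC.mono fun x ⟨hint, hle⟩ => by
      simp_rw [← ENNReal.ofReal_mul (hK0 x _)]
      rw [← ofReal_integral_eq_lintegral_ofReal hint (hKf x)]
      exact ENNReal.ofReal_le_ofReal hle)
    (hd.mono fun y ⟨hint, hle⟩ => by
      rw [← ofReal_integral_eq_lintegral_ofReal hint (.of_forall fun x => hK0 x y)]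
      exact ENNReal.ofReal_le_ofReal hle)
  rw [← ofReal_integral_eq_lintegral_ofReal hf hf0, ← ofReal_measureReal,
    ← ENNReal.ofReal_mul' (integral_nonneg_of_ae hf0), ← ENNReal.ofReal_mul hC0,
    ENNReal.ofReal_le_ofReal_iff'] at hmass
  have : 0 ≤ C * ν₁.real univ := mul_nonneg hC0 measureReal_nonneg
  rcases hmass with h | h <;> linarith

/-- A positive integral is not the junk value of a non-integrable function. -/
theorem integrableOn_and_setIntegral_le_of_integral_pos {α : Type*} [MeasurableSpace α]
    {ν : Measure α} {g : α → ℝ} {A B : Set α} (hBA : B ⊆ A) (hg : 0 ≤ᵐ[ν.restrict A] g)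
    (hpos : 0 < ∫ y in A, g y ∂ν) :
    IntegrableOn g B ν ∧ ∫ y in B, g y ∂ν ≤ ∫ y in A, g y ∂ν := by
  have hint : IntegrableOn g A ν := Integrable.of_integral_ne_zero hpos.ne'
  exact ⟨hint.mono_set hBA, setIntegral_mono_set hint hg hBA.eventuallyLE⟩

theorem integral_eq_two_mul_setIntegral_Icc_of_even {f : ℝ → ℝ} (hf : Integrable f)
    (heven : ∀ x, f (-x) = f x) {a b : ℝ} (ha : 0 < a)
    (hsupp : ∀ x ∉ Icc (-b) (-a) ∪ Icc a b, f x = 0) :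
    ∫ x, f x = 2 * ∫ x in Icc a b, f x := by
  have hdisj : Disjoint (Icc (-b) (-a)) (Icc a b) :=
    disjoint_left.mpr fun x hx hx' => by linarith [hx.2, hx'.1]
  have hrefl : ∫ x in Icc (-b) (-a), f x = ∫ x in Icc a b, f x := by
    rw [← (Measure.measurePreserving_neg volume).setIntegral_preimage_emb
      measurableEmbedding_neg]
    simp [heven]
  rw [← setIntegral_eq_integral_of_forall_compl_eq_zero hsupp,
    setIntegral_union hdisj measurableSet_Icc hf.integrableOn hf.integrableOn, hrefl, two_mul]

section RieszKernel

variable {s a b y : ℝ}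

theorem intervalIntegrable_abs_sub_rpow_neg (hs : s < 1) (a b y : ℝ) :
    IntervalIntegrable (fun x => |x - y| ^ (-s)) volume a b := by
  have hloc : LocallyIntegrable (fun u : ℝ => |u| ^ (-s)) :=
    locallyIntegrable_of_norm_le_rpow (by simp) (α := s) (C := 1) (by simpa using hs)
      (.of_forall fun u => by simp [abs_of_nonneg (Real.rpow_nonneg (abs_nonneg u) _)])
      (measurable_abs.pow_const _).aestronglyMeasurable
  simpa using ((hloc.integrableOn_isCompact isCompact_uIcc).intervalIntegrable
    (a := a - y) (b := b - y)).comp_sub_right y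

theorem integral_abs_sub_rpow_neg (hs : s < 1) (hay : a ≤ y) (hyb : y ≤ b) :
    ∫ x in a..b, |x - y| ^ (-s) = ((y - a) ^ (1 - s) + (b - y) ^ (1 - s)) / (1 - s) := by
  have hr : -1 < -s := by linarith
  have hleft : ∫ x in a..y, |x - y| ^ (-s) = (y - a) ^ (1 - s) / (1 - s) := by
    rw [integral_congr (g := fun x => (y - x) ^ (-s)) fun x hx => ?_, integral_comp_sub_left
      (fun x => x ^ (-s)), sub_self, integral_rpow (.inl hr), Real.zero_rpow (by linarith),
      sub_zero, neg_add_eq_sub]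
    rw [uIcc_of_le hay] at hx
    simp [abs_of_nonpos (sub_nonpos.2 hx.2)]
  have hright : ∫ x in y..b, |x - y| ^ (-s) = (b - y) ^ (1 - s) / (1 - s) := by
    rw [integral_congr (g := fun x => (x - y) ^ (-s)) fun x hx => ?_, integral_comp_sub_right
      (fun x => x ^ (-s)), sub_self, integral_rpow (.inl hr), Real.zero_rpow (by linarith),
      sub_zero, neg_add_eq_sub]
    rw [uIcc_of_le hyb] at hx
    simp [abs_of_nonneg (sub_nonneg.2 hx.1)]
  rw [← integral_add_adjacent_intervals (intervalIntegrable_abs_sub_rpow_neg hs a y y)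
    (intervalIntegrable_abs_sub_rpow_neg hs y b y), hleft, hright, add_div]

theorem rpow_one_sub_div_le_setIntegral_abs_sub_rpow_neg (hs0 : 0 ≤ s) (hs : s < 1)
    (hy : y ∈ Icc a b) :
    (b - a) ^ (1 - s) / (1 - s) ≤ ∫ x in Icc a b, |x - y| ^ (-s) := by
  rw [integral_Icc_eq_integral_Ioc, ← integral_of_le (hy.1.trans hy.2),
    integral_abs_sub_rpow_neg hs hy.1 hy.2]
  refine div_le_div_of_nonneg_right ?_ (by linarith)
  calc (b - a) ^ (1 - s) = (y - a + (b - y)) ^ (1 - s) := by congr 1; ring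
    _ ≤ (y - a) ^ (1 - s) + (b - y) ^ (1 - s) :=
      Real.rpow_add_le_add_rpow (sub_nonneg.2 hy.1) (sub_nonneg.2 hy.2) (by linarith) (by linarith)

end RieszKernel

theorem le_mul_rpow_of_rpow_one_sub_mul_le {ε m c s : ℝ} (hε : 0 < ε)
    (h : ε ^ (1 - s) * m ≤ c * ε) : m ≤ c * ε ^ s := by
  refine le_of_mul_le_mul_left (a := ε ^ (1 - s)) ?_ (Real.rpow_pos_of_pos hε _)
  calc ε ^ (1 - s) * m ≤ c * ε := h
    _ = ε ^ (1 - s) * (c * ε ^ s) := by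
      rw [mul_left_comm, ← Real.rpow_add hε, sub_add_cancel, Real.rpow_one]

theorem stmt9 (s lam : ℝ) (hs0 : 0 < s) (hs1 : s < 1) (hlam : lam ∈ Set.Ioo (0:ℝ) 1)
    (μ : ℝ → ℝ) (hpos : ∀ x, 0 ≤ μ x)
    (hint : Integrable μ)
    (hsupp : ∀ x ∉ Set.Icc (-1:ℝ) (-lam) ∪ Set.Icc lam 1, μ x = 0)
    (hsym : ∀ x, μ (-x) = μ x)
    (hEL : ∀ x ∈ Set.Icc lam 1,
      (∫ y in Set.Icc (-1:ℝ) (-lam) ∪ Set.Icc lam 1, |x - y| ^ (-s) * μ y)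
        = 3 / (1 - s) * x ^ 2) :
    (∫ x, μ x) ≤ 6 * (1 - lam) ^ s := by
  obtain ⟨hlam0, hlam1⟩ := hlam
  have h1s : 0 < 1 - s := by linarith
  have hK0 : ∀ x y : ℝ, 0 ≤ |x - y| ^ (-s) := fun x y => Real.rpow_nonneg (abs_nonneg _) _
  have hbound : ∀ x ∈ Icc lam 1, IntegrableOn (fun y => |x - y| ^ (-s) * μ y) (Icc lam 1) ∧
      ∫ y in Icc lam 1, |x - y| ^ (-s) * μ y ≤ 3 / (1 - s) := by
    intro x hx
    have hx2 : x ^ 2 ≤ 1 := by nlinarith [hx.1, hx.2]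
    have hEL_pos : 0 < 3 / (1 - s) * x ^ 2 := by have := hlam0.trans_le hx.1; positivity
    obtain ⟨hintx, hle⟩ := integrableOn_and_setIntegral_le_of_integral_pos subset_union_right
      (.of_forall fun y => mul_nonneg (hK0 x y) (hpos y)) (hEL x hx ▸ hEL_pos)
    exact ⟨hintx, (hle.trans_eq (hEL x hx)).trans (mul_le_of_le_one_right (by positivity) hx2)⟩
  have hmass := mul_integral_le_of_kernel_bounds (ν₁ := volume.restrict (Icc lam 1))
    (ν₂ := volume.restrict (Icc lam 1)) (K := fun x y => |x - y| ^ (-s)) (by fun_prop) hK0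
    hint.integrableOn (.of_forall hpos) (by positivity)
    (ae_restrict_of_forall_mem measurableSet_Icc hbound)
    (ae_restrict_of_forall_mem measurableSet_Icc fun y hy =>
      ⟨(intervalIntegrable_iff_integrableOn_Icc_of_le hlam1.le).mp
          (intervalIntegrable_abs_sub_rpow_neg hs1 lam 1 y),
        rpow_one_sub_div_le_setIntegral_abs_sub_rpow_neg hs0.le hs1 hy⟩)
  rw [measureReal_restrict_apply_univ, Real.volume_real_Icc_of_le hlam1.le,
    div_mul_eq_mul_div, div_mul_eq_mul_div, div_le_div_iff_of_pos_right h1s] at hmass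
  rw [integral_eq_two_mul_setIntegral_Icc_of_even hint hsym hlam0 hsupp]
  linarith [le_mul_rpow_of_rpow_one_sub_mul_le (sub_pos.2 hlam1) hmass]
end

section
/- For b = 1, the probability density ρ(x) = (3/2)x² on [-1,1] satisfies the Euler–Lagrange conditions for the energy with interaction potential W(x) = -|x| and external potential U(x) = x⁴/4: namely, (W*ρ)(x) + U(x) is constant on [-1,1] and ≥ that constant on all of ℝ. -/
lemma poly_int (a b x : ℝ) : ∫ y in a..b, (x - y) * (3/2*y^2)
    = x*(b^3-a^3)/2 - 3*(b^4-a^4)/8 := by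
  have h : ∀ y : ℝ, (x - y) * (3/2*y^2) = x*(3/2)*y^2 - (3/2)*y^3 := by intro y; ring
  simp_rw [h]
  rw [intervalIntegral.integral_sub (by apply Continuous.intervalIntegrable; continuity)
    (by apply Continuous.intervalIntegrable; continuity),
    intervalIntegral.integral_const_mul, intervalIntegral.integral_const_mul,
    integral_pow, integral_pow]
  ring

lemma abs_left (a b x : ℝ) (hab : a ≤ b) (hb : b ≤ x) :
    ∫ y in a..b, |x - y| * (3/2*y^2) = x*(b^3-a^3)/2 - 3*(b^4-a^4)/8 := by
  rw [← poly_int a b x]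
  apply intervalIntegral.integral_congr
  intro y hy
  rw [Set.uIcc_of_le hab] at hy
  have hyx : y ≤ x := le_trans hy.2 hb
  dsimp only
  rw [abs_of_nonneg (by linarith)]

lemma abs_right (a b x : ℝ) (hab : a ≤ b) (ha : x ≤ a) :
    ∫ y in a..b, |x - y| * (3/2*y^2) = -(x*(b^3-a^3)/2 - 3*(b^4-a^4)/8) := by
  have : ∫ y in a..b, |x - y| * (3/2*y^2) = ∫ y in a..b, -((x - y) * (3/2*y^2)) := by
    apply intervalIntegral.integral_congr
    intro y hy
    rw [Set.uIcc_of_le hab] at hy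
    have hxy : x ≤ y := le_trans ha hy.1
    dsimp only
    rw [abs_of_nonpos (by linarith)]
    ring
  rw [this, intervalIntegral.integral_neg, poly_int]

lemma int_mid (x : ℝ) (h1 : -1 ≤ x) (h2 : x ≤ 1) :
    ∫ y in (-1:ℝ)..1, |x - y| * (3/2*y^2) = x^4/4 + 3/4 := by
  rw [← intervalIntegral.integral_add_adjacent_intervals (b := x)
    (by apply Continuous.intervalIntegrable; continuity)
    (by apply Continuous.intervalIntegrable; continuity),
    abs_left (-1) x x h1 le_rfl, abs_right x 1 x h2 le_rfl]
  ring

theorem stmt10 :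
    ∃ C0 : ℝ,
      (∀ x ∈ Set.Icc (-1:ℝ) 1,
        (-∫ y in (-1:ℝ)..1, |x - y| * (3 / 2 * y ^ 2)) + x ^ 4 / 4 = C0) ∧
      ∀ x : ℝ, C0 ≤ (-∫ y in (-1:ℝ)..1, |x - y| * (3 / 2 * y ^ 2)) + x ^ 4 / 4 := by
  refine ⟨-3/4, fun x hx => by rw [int_mid x hx.1 hx.2]; ring, fun x => ?_⟩
  rcases le_or_gt x (-1) with h | h
  · rw [abs_right (-1) 1 x (by norm_num) h]
    nlinarith [sq_nonneg (x+1), sq_nonneg (x^2-1), sq_nonneg (x^2+x), sq_nonneg (x^2-x)]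
  rcases le_or_gt 1 x with h' | h'
  · rw [abs_left (-1) 1 x (by norm_num) h']
    nlinarith [sq_nonneg (x-1), sq_nonneg (x^2-1), sq_nonneg (x^2+x), sq_nonneg (x^2-x)]
  · rw [int_mid x h.le h'.le]; norm_num
end

section
/- Let 0 < s < 1. For λ ∈ (0,1), ε = 1-λ sufficiently small, and total mass m ≥ C ε^{1+s} with C = 48/((1-s)s), any measure ρ of mass m on K_{λ,1} = [-1,-λ]∪[λ,1] symmetric under x↦-x with support mass m/2 on [λ,1] satisfies: for x ∈ (λ,1) at distance ≥ 0 from supp ρ ∩ [λ,1] lying left of all support in [λ,1], the derivative of V[ρ](x) = (W*ρ)(x) - 3x²/(1-s) satisfies V[ρ]'(x) ≥ (m/2)s(ε^{-s-1} - 1) - 6/(1-s) > 0. -/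
/-!
Since `x` has the `ρ`-null neighbourhood `(λ, x')`, the potential may be differentiated under the
integral sign, with derivative `∫ -s |x - t| ^ (-s - 1) sign (x - t) dρ`. The mass `m / 2` on
`[x', 1]` lies within `ε = 1 - λ` to the right of `x`, so each unit of it contributes at least
`s ε ^ (-s - 1)`; the mass on `[-1, -λ]` lies at distance `≥ 2λ ≥ 1` to the left, so each unit
contributes at least `-s`. The confinement term contributes at least `-6 / (1 - s)`, and the bound
is positive because `m s ε ^ (-s - 1) ≥ 48 / (1 - s)` and `ε ^ (-s - 1) ≥ 2`.
-/

open MeasureTheory Filter Set Topology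

lemma monotone_coe_sign : Monotone fun y : ℝ => (SignType.sign y : ℝ) := by
  intro a b h
  simp only [sign_apply]
  split_ifs <;> norm_num <;> linarith

lemma abs_coe_sign_le_one (y : ℝ) : |(SignType.sign y : ℝ)| ≤ 1 := by
  rcases lt_trichotomy y 0 with h | h | h <;> simp [h]

lemma hasDerivAt_abs_sub_rpow {p t z : ℝ} (hzt : z ≠ t) :
    HasDerivAt (fun w => |w - t| ^ p) (p * |z - t| ^ (p - 1) * SignType.sign (z - t)) z := by
  have habs : HasDerivAt (fun w => |w - t|) (SignType.sign (z - t)) z := by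
    have h := (hasDerivAt_abs (sub_ne_zero.2 hzt)).comp z ((hasDerivAt_id' z).sub_const t)
    rwa [mul_one] at h
  convert habs.rpow_const (p := p) (Or.inl (abs_ne_zero.2 (sub_ne_zero.2 hzt))) using 1
  ring

theorem hasDerivAt_integral_abs_sub_rpow {ρ : Measure ℝ} [IsFiniteMeasure ρ] {p x : ℝ}
    {U : Set ℝ} (hp : p ≤ 0) (hU : U ∈ 𝓝 x) (hρU : ρ U = 0) :
    Integrable (fun t => p * |x - t| ^ (p - 1) * SignType.sign (x - t)) ρ ∧
      HasDerivAt (fun z => ∫ t, |z - t| ^ p ∂ρ)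
        (∫ t, p * |x - t| ^ (p - 1) * SignType.sign (x - t) ∂ρ) x := by
  obtain ⟨r, hr, hball⟩ := Metric.mem_nhds_iff.1 hU
  have hr2 : 0 < r / 2 := half_pos hr
  have hnear : ∀ᵐ t ∂ρ, ∀ z ∈ Metric.ball x (r / 2), r / 2 ≤ |z - t| := by
    filter_upwards [measure_eq_zero_iff_ae_notMem.1 (measure_mono_null hball hρU)] with t ht z hz
    rw [Metric.mem_ball, Real.dist_eq] at ht hz
    linarith [abs_sub_le t z x, abs_sub_comm x t, abs_sub_comm t z]
  refine hasDerivAt_integral_of_dominated_loc_of_deriv_le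
    (F' := fun z t => p * |z - t| ^ (p - 1) * SignType.sign (z - t))
    (bound := fun _ => |p| * (r / 2) ^ (p - 1)) (Metric.ball_mem_nhds x hr2)
    (Eventually.of_forall fun z =>
      (by fun_prop : Measurable fun t => |z - t| ^ p).aestronglyMeasurable)
    ?_ ?_ ?_ (integrable_const (μ := ρ) _) ?_
  · refine (integrable_const ((r / 2) ^ p)).mono'
      (by fun_prop : Measurable fun t => |x - t| ^ p).aestronglyMeasurable ?_
    filter_upwards [hnear] with t ht
    rw [Real.norm_of_nonneg (by positivity)]
    exact Real.rpow_le_rpow_of_nonpos hr2 (ht x (Metric.mem_ball_self hr2)) hp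
  · exact ((by fun_prop : Measurable fun t => p * |x - t| ^ (p - 1)).mul
      (monotone_coe_sign.measurable.comp (by fun_prop))).aestronglyMeasurable
  · filter_upwards [hnear] with t ht z hz
    simp only [norm_mul, Real.norm_eq_abs, abs_of_nonneg (Real.rpow_nonneg (abs_nonneg _) _)]
    calc |p| * |z - t| ^ (p - 1) * |(SignType.sign (z - t) : ℝ)|
        ≤ |p| * |z - t| ^ (p - 1) := mul_le_of_le_one_right (by positivity) (abs_coe_sign_le_one _)
      _ ≤ |p| * (r / 2) ^ (p - 1) := mul_le_mul_of_nonneg_left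
          (Real.rpow_le_rpow_of_nonpos hr2 (ht z hz) (by linarith)) (abs_nonneg p)
  · filter_upwards [hnear] with t ht z hz
    exact hasDerivAt_abs_sub_rpow (sub_ne_zero.1 (abs_pos.1 (hr2.trans_le (ht z hz))))

theorem le_integral_neg_rpow_sign {ρ : Measure ℝ} [IsFiniteMeasure ρ] {s x ε : ℝ}
    (hs : 0 ≤ s) (hρ : ∀ᵐ t ∂ρ, t ≤ x - 1 ∨ t ∈ Ioc x (x + ε))
    (hint : Integrable (fun t => -s * |x - t| ^ (-s - 1) * SignType.sign (x - t)) ρ) :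
    s * (ε ^ (-s - 1) + 1) * ρ.real (Ioi x) - s * ρ.real univ ≤
      ∫ t, -s * |x - t| ^ (-s - 1) * SignType.sign (x - t) ∂ρ := by
  set g : ℝ → ℝ := fun t => (Ioi x).indicator (fun _ => s * (ε ^ (-s - 1) + 1)) t - s
  have hg : Integrable g ρ :=
    ((integrable_const _).indicator measurableSet_Ioi).sub (integrable_const _)
  have hgle : ∀ᵐ t ∂ρ, g t ≤ -s * |x - t| ^ (-s - 1) * SignType.sign (x - t) := by
    filter_upwards [hρ] with t ht
    rcases ht with hleft | ⟨hxt, htε⟩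
    · have hfar : |x - t| ^ (-s - 1) ≤ 1 :=
        Real.rpow_le_one_of_one_le_of_nonpos (by rw [abs_of_pos (by linarith)]; linarith)
          (by linarith)
      simp only [g, indicator_of_notMem (show t ∉ Ioi x by rw [mem_Ioi, not_lt]; linarith),
        sign_pos (show 0 < x - t by linarith), SignType.coe_one]
      nlinarith [mul_le_mul_of_nonneg_left hfar hs]
    · have hnear : ε ^ (-s - 1) ≤ |x - t| ^ (-s - 1) :=
        Real.rpow_le_rpow_of_nonpos (abs_pos.2 (by linarith))
          (by rw [abs_of_neg (by linarith)]; linarith) (by linarith)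
      simp only [g, indicator_of_mem (show t ∈ Ioi x from hxt),
        sign_neg (show x - t < 0 by linarith), SignType.coe_neg_one]
      nlinarith [mul_le_mul_of_nonneg_left hnear hs]
  calc s * (ε ^ (-s - 1) + 1) * ρ.real (Ioi x) - s * ρ.real univ = ∫ t, g t ∂ρ := by
        rw [integral_sub ((integrable_const _).indicator measurableSet_Ioi) (integrable_const _),
          integral_indicator_const _ measurableSet_Ioi, integral_const, smul_eq_mul,
          smul_eq_mul]
        ring
    _ ≤ _ := integral_mono_ae hg hint hgle

lemma ae_le_sub_one_or_mem_Ioc {ρ : Measure ℝ} {lam x x' : ℝ} (hlam : 1 / 2 ≤ lam)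
    (hx : lam < x) (hxx' : x < x') (hsupp : ρ (Icc (-1) (-lam) ∪ Icc lam 1)ᶜ = 0)
    (hgap : ρ (Ico lam x') = 0) :
    ∀ᵐ t ∂ρ, t ≤ x - 1 ∨ t ∈ Ioc x (x + (1 - lam)) := by
  filter_upwards [measure_eq_zero_iff_ae_notMem.1 hsupp, measure_eq_zero_iff_ae_notMem.1 hgap]
    with t hK hnotgap
  simp only [mem_compl_iff, not_not, mem_union, mem_Icc, mem_Ico, not_and, not_lt] at hK hnotgap
  rcases hK with hneg | hpos
  · exact Or.inl (by linarith [hneg.2])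
  · exact Or.inr ⟨by linarith [hnotgap hpos.1], by linarith [hpos.2]⟩

lemma measure_Icc_le_measure_Ioi {ρ : Measure ℝ} {a b c x : ℝ} (hxc : x < c)
    (hgap : ρ (Ico a c) = 0) : ρ (Icc a b) ≤ ρ (Ioi x) :=
  calc ρ (Icc a b) ≤ ρ (Ico a c ∪ Ioi x) := measure_mono fun t ht => by
        rcases lt_or_ge t c with htc | htc
        · exact Or.inl ⟨ht.1, htc⟩
        · exact Or.inr (hxc.trans_le htc)
    _ ≤ ρ (Ico a c) + ρ (Ioi x) := measure_union_le _ _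
    _ = ρ (Ioi x) := by rw [hgap, zero_add]

lemma div_lt_half_mul_rpow_sub_one {s ε m : ℝ} (hs0 : 0 < s) (hs1 : s < 1) (hε0 : 0 < ε)
    (hε : ε ≤ 1 / 2) (hm : 48 / ((1 - s) * s) * ε ^ (1 + s) ≤ m) :
    6 / (1 - s) < m / 2 * s * (ε ^ (-s - 1) - 1) := by
  have hc : 0 < 1 - s := by linarith
  have hA2 : 2 ≤ ε ^ (-s - 1) :=
    calc (2 : ℝ) ≤ ε⁻¹ := by rw [le_inv_comm₀ (by norm_num) hε0]; linarith
      _ = ε ^ (-1 : ℝ) := (Real.rpow_neg_one ε).symm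
      _ ≤ ε ^ (-s - 1) := Real.rpow_le_rpow_of_exponent_ge hε0 (by linarith) (by linarith)
  have hmA : 48 / (1 - s) ≤ m * s * ε ^ (-s - 1) :=
    calc 48 / (1 - s) = 48 / ((1 - s) * s) * (ε ^ (1 + s) * ε ^ (-s - 1)) * s := by
          rw [← Real.rpow_add hε0, show 1 + s + (-s - 1) = 0 by ring, Real.rpow_zero]
          field_simp
      _ ≤ m * s * ε ^ (-s - 1) := by
          rw [← mul_assoc, mul_right_comm _ _ s]
          exact mul_le_mul_of_nonneg_right (mul_le_mul_of_nonneg_right hm hs0.le)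
            (by positivity)
  have h12 : 12 / (1 - s) ≤ m / 2 * s * (ε ^ (-s - 1) - 1) := by
    have hms : 0 ≤ m * s := by nlinarith [div_pos (by norm_num : (0 : ℝ) < 48) hc]
    rw [show 12 / (1 - s) = 48 / (1 - s) / 4 by ring]
    nlinarith
  calc 6 / (1 - s) < 12 / (1 - s) := div_lt_div_of_pos_right (by norm_num) hc
    _ ≤ _ := h12

theorem stmt16_general (s lam m x x' : ℝ) (hs0 : 0 < s) (hs1 : s < 1)
    (hεsmall : 1 - lam ≤ 1 / 2)
    (hm : 48 / ((1 - s) * s) * (1 - lam) ^ (1 + s) ≤ m)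
    (ρ : Measure ℝ) [IsFiniteMeasure ρ]
    (hsupp : ρ (Set.Icc (-1:ℝ) (-lam) ∪ Set.Icc lam 1)ᶜ = 0)
    (hmass : ρ Set.univ = ENNReal.ofReal m)
    (hhalf : ρ (Set.Icc lam 1) = ENNReal.ofReal (m / 2))
    (hx : lam < x) (hxx' : x < x') (hx'1 : x' ≤ 1)
    (hgap : ρ (Set.Ico lam x') = 0) :
    m / 2 * s * ((1 - lam) ^ (-s - 1) - 1) - 6 / (1 - s)
      ≤ deriv (fun z : ℝ => (∫ t, |z - t| ^ (-s) ∂ρ) - 3 * z ^ 2 / (1 - s)) x ∧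
    0 < m / 2 * s * ((1 - lam) ^ (-s - 1) - 1) - 6 / (1 - s) := by
  have hc : 0 < 1 - s := by linarith
  have hε0 : 0 < 1 - lam := by linarith
  have hm0 : 0 ≤ m := le_trans (mul_nonneg (div_nonneg (by norm_num) (mul_pos hc hs0).le)
    (Real.rpow_nonneg hε0.le _)) hm
  obtain ⟨hint, hpotential⟩ := hasDerivAt_integral_abs_sub_rpow (ρ := ρ) (p := -s)
    (by linarith) (Ioo_mem_nhds hx hxx') (measure_mono_null Ioo_subset_Ico_self hgap)
  have hquad : HasDerivAt (fun z : ℝ => 3 * z ^ 2 / (1 - s)) (6 * x / (1 - s)) x :=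
    (((hasDerivAt_pow 2 x).const_mul 3).div_const (1 - s)).congr_deriv (by norm_num; ring)
  have hright : m / 2 ≤ ρ.real (Ioi x) := by
    rw [measureReal_def, ← ENNReal.toReal_ofReal (by linarith : 0 ≤ m / 2), ← hhalf]
    exact ENNReal.toReal_mono (measure_ne_top _ _) (measure_Icc_le_measure_Ioi hxx' hgap)
  have htotal : ρ.real univ = m := by rw [measureReal_def, hmass, ENNReal.toReal_ofReal hm0]
  have hforce := le_integral_neg_rpow_sign hs0.le
    (ae_le_sub_one_or_mem_Ioc (by linarith) hx hxx' hsupp hgap) hint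
  have hconfine : 6 * x / (1 - s) ≤ 6 / (1 - s) := by gcongr; linarith
  refine ⟨?_, sub_pos.2 (div_lt_half_mul_rpow_sub_one hs0 hs1 hε0 hεsmall hm)⟩
  have hV : HasDerivAt (fun z : ℝ => (∫ t, |z - t| ^ (-s) ∂ρ) - 3 * z ^ 2 / (1 - s))
      ((∫ t, -s * |x - t| ^ (-s - 1) * SignType.sign (x - t) ∂ρ) - 6 * x / (1 - s)) x :=
    hpotential.sub hquad
  rw [hV.deriv]
  nlinarith [mul_le_mul_of_nonneg_left hright
    (mul_nonneg hs0.le (add_nonneg (Real.rpow_nonneg hε0.le (-s - 1)) zero_le_one))]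

theorem stmt16 (s lam m x x' : ℝ) (hs0 : 0 < s) (hs1 : s < 1)
    (hlam : lam ∈ Set.Ioo (0:ℝ) 1) (hεsmall : 1 - lam ≤ 1 / 2)
    (hm : 48 / ((1 - s) * s) * (1 - lam) ^ (1 + s) ≤ m)
    (ρ : Measure ℝ) [IsFiniteMeasure ρ]
    (hsupp : ρ (Set.Icc (-1:ℝ) (-lam) ∪ Set.Icc lam 1)ᶜ = 0)
    (hsym : ρ.map (fun t => -t) = ρ)
    (hmass : ρ Set.univ = ENNReal.ofReal m)
    (hhalf : ρ (Set.Icc lam 1) = ENNReal.ofReal (m / 2))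
    (hx : lam < x) (hxx' : x < x') (hx'1 : x' ≤ 1)
    (hgap : ρ (Set.Ico lam x') = 0) :
    m / 2 * s * ((1 - lam) ^ (-s - 1) - 1) - 6 / (1 - s)
      ≤ deriv (fun z : ℝ => (∫ t, |z - t| ^ (-s) ∂ρ) - 3 * z ^ 2 / (1 - s)) x ∧
    0 < m / 2 * s * ((1 - lam) ^ (-s - 1) - 1) - 6 / (1 - s) :=
  stmt16_general s lam m x x' hs0 hs1 hεsmall hm ρ hsupp hmass hhalf hx hxx' hx'1 hgap
end
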